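/- arXiv:1109.5052 — 3 statements merged into one kernel-verified Lean document; each statement's English description precedes it below -/
import Mathlib

section
/- Let F be a field and let (X_i, g_{i,j}) and (Y_i, h_{i,j}) be two filtrations of finite-dimensional F-vector spaces indexed by 0 ≤ i ≤ m, connected contravariantly by a non-degenerate compatible family of bilinear pairings ⟨·,·⟩_j : X_j × Y_{m-j} → F. Fix 0 ≤ i ≤ j ≤ m. Since ⟨·,·⟩_j vanishes on (range g_{i,j}) × (ker h_{m-j,m-i}), it descends to a well-defined bilinear pairing between the subspace range(g_{i,j}) ⊆ X_j and the quotient Y_{m-j} / ker(h_{m-j,m-i}), given by ⟨ξ, [η]⟩ = ⟨ξ, η⟩_j. This descended pairing is non-degenerate: every nonzero element of range(g_{i,j}) pairs nontrivially with some coset in Y_{m-j} / ker(h_{m-j,m-i}), and every nonzero coset pairs nontrivially with some element of range(g_{i,j}). -/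
open Module LinearMap

/-- The pairing descends to a non-degenerate pairing between the
subspace `range (g i j)` and the quotient `Y (m-j) ⧸ ker (h (m-j) (m-i))`. -/
theorem descended_pairing_range_quotient_nondegenerate
    (F : Type*) [Field F] (m : ℕ)
    (X Y : ℕ → Type*)
    [∀ i, AddCommGroup (X i)] [∀ i, Module F (X i)] [∀ i, FiniteDimensional F (X i)]
    [∀ i, AddCommGroup (Y i)] [∀ i, Module F (Y i)] [∀ i, FiniteDimensional F (Y i)]
    (g : ∀ i j : ℕ, i ≤ j → (X i →ₗ[F] X j))
    (h : ∀ i j : ℕ, i ≤ j → (Y i →ₗ[F] Y j))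
    (gid : ∀ i, g i i le_rfl = LinearMap.id)
    (gcomp : ∀ i j k (hij : i ≤ j) (hjk : j ≤ k),
      (g j k hjk).comp (g i j hij) = g i k (hij.trans hjk))
    (hid : ∀ i, h i i le_rfl = LinearMap.id)
    (hcomp : ∀ i j k (hij : i ≤ j) (hjk : j ≤ k),
      (h j k hjk).comp (h i j hij) = h i k (hij.trans hjk))
    (pair : ∀ j : ℕ, X j →ₗ[F] Y (m - j) →ₗ[F] F)
    (nondegX : ∀ j : ℕ, j ≤ m → ∀ ξ : X j, ξ ≠ 0 → ∃ η : Y (m - j), pair j ξ η ≠ 0)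
    (nondegY : ∀ j : ℕ, j ≤ m → ∀ η : Y (m - j), η ≠ 0 → ∃ ξ : X j, pair j ξ η ≠ 0)
    (compat : ∀ (i j : ℕ) (hij : i ≤ j), j ≤ m → ∀ (ξ' : X i) (η : Y (m - j)),
      pair j (g i j hij ξ') η
        = pair i ξ' (h (m - j) (m - i) (Nat.sub_le_sub_left hij m) η)) :
    ∀ (i j : ℕ) (hij : i ≤ j), j ≤ m →
      ∃ P : LinearMap.range (g i j hij) →ₗ[F]
            (Y (m - j) ⧸ LinearMap.ker (h (m - j) (m - i) (Nat.sub_le_sub_left hij m))) →ₗ[F] F,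
        (∀ (ξ : LinearMap.range (g i j hij)) (η : Y (m - j)),
          P ξ (Submodule.Quotient.mk η) = pair j ξ.1 η) ∧
        (∀ ξ : LinearMap.range (g i j hij), ξ ≠ 0 →
          ∃ y : Y (m - j) ⧸ LinearMap.ker (h (m - j) (m - i) (Nat.sub_le_sub_left hij m)),
            P ξ y ≠ 0) ∧
        (∀ y : Y (m - j) ⧸ LinearMap.ker (h (m - j) (m - i) (Nat.sub_le_sub_left hij m)),
          y ≠ 0 → ∃ ξ : LinearMap.range (g i j hij), P ξ y ≠ 0) := by

  intro i j hij hjm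
  set K := LinearMap.ker (h (m - j) (m - i) (Nat.sub_le_sub_left hij m)) with hK
  have hvanish : ∀ ξ : LinearMap.range (g i j hij), K ≤ LinearMap.ker (pair j ξ.1) := by
    rintro ⟨_, x, rfl⟩ η hη
    simp only [LinearMap.mem_ker] at hη ⊢
    rw [compat i j hij hjm x η, hη, map_zero]
  refine ⟨{ toFun := fun ξ => K.liftQ (pair j ξ.1) (hvanish ξ)
            map_add' := ?_
            map_smul' := ?_ }, ?_, ?_, ?_⟩
  · intro ξ ζ
    apply Submodule.linearMap_qext
    ext η
    simp
  · intro c ξ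
    apply Submodule.linearMap_qext
    ext η
    simp
  · intro ξ η
    rfl
  · intro ξ hξ
    have hξ1 : ξ.1 ≠ 0 := fun hc => hξ (Subtype.ext hc)
    obtain ⟨η, hη⟩ := nondegX j hjm ξ.1 hξ1
    exact ⟨Submodule.Quotient.mk η, hη⟩
  · intro y hy
    obtain ⟨η, rfl⟩ := Submodule.Quotient.mk_surjective _ y
    have hη : h (m - j) (m - i) (Nat.sub_le_sub_left hij m) η ≠ 0 := by
      intro hc
      exact hy (Submodule.Quotient.mk_eq_zero K |>.2 (LinearMap.mem_ker.2 hc))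
    obtain ⟨x, hx⟩ := nondegY i (hij.trans hjm) _ hη
    refine ⟨⟨g i j hij x, x, rfl⟩, ?_⟩
    show K.liftQ _ _ _ ≠ 0
    rw [Submodule.liftQ_apply, compat i j hij hjm x η]
    exact hx
end

section
/- Let F be a field and let (X_i, g_{i,j}) and (Y_i, h_{i,j}) be two filtrations of finite-dimensional F-vector spaces indexed by 0 ≤ i ≤ m, connected contravariantly by a non-degenerate compatible family of bilinear pairings ⟨·,·⟩_j : X_j × Y_{m-j} → F. Then for all 0 ≤ i ≤ j ≤ k ≤ m, dim_F(range(g_{i,j}) ∩ ker(g_{j,k})) = dim_F(Y_{m-j}) − dim_F(range(h_{m-k,m-j}) + ker(h_{m-j,m-i})), i.e. the dimension of range(g_{i,j}) ∩ ker(g_{j,k}) equals the dimension of the quotient of Y_{m-j} by the subspace range(h_{m-k,m-j}) + ker(h_{m-j,m-i}). -/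
open Module LinearMap

/-- `dim (range g_{i,j} ∩ ker g_{j,k})` equals the codimension of
`range h_{m-k,m-j} + ker h_{m-j,m-i}` in `Y_{m-j}`. -/
theorem dim_inf_eq_codim_sup
    (F : Type*) [Field F] (m : ℕ)
    (X Y : ℕ → Type*)
    [∀ i, AddCommGroup (X i)] [∀ i, Module F (X i)] [∀ i, FiniteDimensional F (X i)]
    [∀ i, AddCommGroup (Y i)] [∀ i, Module F (Y i)] [∀ i, FiniteDimensional F (Y i)]
    (g : ∀ i j : ℕ, i ≤ j → (X i →ₗ[F] X j))
    (h : ∀ i j : ℕ, i ≤ j → (Y i →ₗ[F] Y j))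
    (gid : ∀ i, g i i le_rfl = LinearMap.id)
    (gcomp : ∀ i j k (hij : i ≤ j) (hjk : j ≤ k),
      (g j k hjk).comp (g i j hij) = g i k (hij.trans hjk))
    (hid : ∀ i, h i i le_rfl = LinearMap.id)
    (hcomp : ∀ i j k (hij : i ≤ j) (hjk : j ≤ k),
      (h j k hjk).comp (h i j hij) = h i k (hij.trans hjk))
    (pair : ∀ j : ℕ, X j →ₗ[F] Y (m - j) →ₗ[F] F)
    (nondegX : ∀ j : ℕ, j ≤ m → ∀ ξ : X j, ξ ≠ 0 → ∃ η : Y (m - j), pair j ξ η ≠ 0)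
    (nondegY : ∀ j : ℕ, j ≤ m → ∀ η : Y (m - j), η ≠ 0 → ∃ ξ : X j, pair j ξ η ≠ 0)
    (compat : ∀ (i j : ℕ) (hij : i ≤ j), j ≤ m → ∀ (ξ' : X i) (η : Y (m - j)),
      pair j (g i j hij ξ') η
        = pair i ξ' (h (m - j) (m - i) (Nat.sub_le_sub_left hij m) η)) :
    ∀ (i j k : ℕ) (hij : i ≤ j) (hjk : j ≤ k), k ≤ m →
      finrank F ↥(LinearMap.range (g i j hij) ⊓ LinearMap.ker (g j k hjk))
        = finrank F (Y (m - j))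
          - finrank F ↥(LinearMap.range (h (m - k) (m - j) (Nat.sub_le_sub_left hjk m)) ⊔
                        LinearMap.ker (h (m - j) (m - i) (Nat.sub_le_sub_left hij m))) := by
  intro i j k hij hjk hkm
  have hjm : j ≤ m := hjk.trans hkm
  have him : i ≤ m := hij.trans hjm
  have hinj : ∀ l, l ≤ m → Function.Injective (pair l) := by
    intro l hl
    rw [← LinearMap.ker_eq_bot, LinearMap.ker_eq_bot']
    intro ξ hξ
    by_contra hne
    obtain ⟨η, hη⟩ := nondegX l hl ξ hne
    exact hη (by rw [hξ]; rfl)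
  have hbij : ∀ l, l ≤ m → Function.Bijective (pair l) := by
    intro l hl
    refine ⟨hinj l hl, ?_⟩
    have hinj2 : Function.Injective (pair l).flip := by
      rw [← LinearMap.ker_eq_bot, LinearMap.ker_eq_bot']
      intro η hη
      by_contra hne
      obtain ⟨ξ, hξ⟩ := nondegY l hl η hne
      apply hξ
      have := congrArg (fun f => f ξ) hη
      simpa using this
    have hle1 : finrank F (X l) ≤ finrank F (Y (m - l)) := by
      have := LinearMap.finrank_le_finrank_of_injective (hinj l hl)
      rwa [Subspace.dual_finrank_eq] at this
    have hle2 : finrank F (Y (m - l)) ≤ finrank F (X l) := by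
      have := LinearMap.finrank_le_finrank_of_injective hinj2
      rwa [Subspace.dual_finrank_eq] at this
    have heq : finrank F (X l) = finrank F (Module.Dual F (Y (m - l))) := by
      rw [Subspace.dual_finrank_eq]; omega
    exact (LinearMap.injective_iff_surjective_of_finrank_eq_finrank heq).mp (hinj l hl)
  let e : ∀ l, l ≤ m → (X l ≃ₗ[F] Module.Dual F (Y (m - l))) :=
    fun l hl => LinearEquiv.ofBijective (pair l) (hbij l hl)
  set W : Submodule F (Y (m - j)) :=
    LinearMap.range (h (m - k) (m - j) (Nat.sub_le_sub_left hjk m)) ⊔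
      LinearMap.ker (h (m - j) (m - i) (Nat.sub_le_sub_left hij m)) with hW
  have comm1 : (e j hjm).toLinearMap ∘ₗ g i j hij
      = (h (m - j) (m - i) (Nat.sub_le_sub_left hij m)).dualMap ∘ₗ (e i him).toLinearMap := by
    ext ξ' η
    exact compat i j hij hjm ξ' η
  have comm2 : (e k hkm).toLinearMap ∘ₗ g j k hjk
      = (h (m - k) (m - j) (Nat.sub_le_sub_left hjk m)).dualMap ∘ₗ (e j hjm).toLinearMap := by
    ext ξ' η
    exact compat j k hjk hkm ξ' η
  have hmap : Submodule.map (e j hjm).toLinearMap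
        (LinearMap.range (g i j hij) ⊓ LinearMap.ker (g j k hjk))
      = W.dualAnnihilator := by
    rw [Submodule.map_inf (e j hjm).toLinearMap (e j hjm).injective]
    have h1 : Submodule.map (e j hjm).toLinearMap (LinearMap.range (g i j hij))
        = (LinearMap.ker (h (m - j) (m - i) (Nat.sub_le_sub_left hij m))).dualAnnihilator := by
      rw [← LinearMap.range_dualMap_eq_dualAnnihilator_ker, ← LinearMap.range_comp, comm1,
        LinearMap.range_comp, LinearEquiv.range, Submodule.map_top]
    have h2 : Submodule.map (e j hjm).toLinearMap (LinearMap.ker (g j k hjk))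
        = (LinearMap.range (h (m - k) (m - j) (Nat.sub_le_sub_left hjk m))).dualAnnihilator := by
      rw [← LinearMap.ker_dualMap_eq_dualAnnihilator_range]
      have hker : LinearMap.ker (g j k hjk)
          = Submodule.comap (e j hjm).toLinearMap
              (LinearMap.ker ((h (m - k) (m - j) (Nat.sub_le_sub_left hjk m)).dualMap)) := by
        ext ξ
        simp only [LinearMap.mem_ker, Submodule.mem_comap]
        have hc := LinearMap.congr_fun comm2 ξ
        simp only [LinearMap.comp_apply] at hc
        constructor
        · intro h0
          rw [← hc, h0, map_zero]
        · intro h0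
          apply (e k hkm).injective
          show (e k hkm).toLinearMap _ = (e k hkm).toLinearMap _
          rw [map_zero]
          exact hc.trans h0
      rw [hker, Submodule.map_comap_eq_of_surjective (f := (e j hjm).toLinearMap) (e j hjm).surjective]
    rw [h1, h2, hW, Submodule.dualAnnihilator_sup_eq, inf_comm]
  have hfin : finrank F ↥(LinearMap.range (g i j hij) ⊓ LinearMap.ker (g j k hjk))
      = finrank F W.dualAnnihilator := by
    rw [← hmap]
    exact (Submodule.equivMapOfInjective (e j hjm).toLinearMap (e j hjm).injective
      _).finrank_eq
  rw [hfin, ← LinearEquiv.finrank_eq (Subspace.quotEquivAnnihilator W)]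
  have := Submodule.finrank_quotient_add_finrank W
  omega
end

section
/- Let F be a field and let (X_i, g_{i,j}) and (Y_i, h_{i,j}) be two filtrations of finite-dimensional F-vector spaces indexed by 0 ≤ i ≤ m, connected contravariantly by a non-degenerate compatible family of bilinear pairings ⟨·,·⟩_j : X_j × Y_{m-j} → F. Then for all 0 ≤ i ≤ j ≤ k ≤ m, dim_F(ker g_{j,k}) − dim_F(range(g_{i,j}) ∩ ker(g_{j,k})) = dim_F(ker h_{m-j,m-i}) − dim_F(range(h_{m-k,m-j}) ∩ ker(h_{m-j,m-i})). -/
open Module LinearMap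

theorem aux_ann_finrank (F V : Type*) [Field F] [AddCommGroup V] [Module F V]
    [FiniteDimensional F V] (W : Submodule F V) :
    finrank F W + finrank F W.dualAnnihilator = finrank F V := by
  have h1 := Submodule.finrank_quotient_add_finrank W
  have h2 : finrank F (V ⧸ W) = finrank F W.dualAnnihilator :=
    LinearEquiv.finrank_eq (Subspace.quotEquivAnnihilator W)
  omega

theorem aux_dual_dims (F A B C : Type*) [Field F]
    [AddCommGroup A] [Module F A] [FiniteDimensional F A]
    [AddCommGroup B] [Module F B] [FiniteDimensional F B]
    [AddCommGroup C] [Module F C] [FiniteDimensional F C]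
    (a : A →ₗ[F] B) (b : B →ₗ[F] C) :
    finrank F ↥(LinearMap.ker b) - finrank F ↥(LinearMap.range a ⊓ LinearMap.ker b)
      = finrank F ↥(LinearMap.ker a.dualMap)
        - finrank F ↥(LinearMap.range b.dualMap ⊓ LinearMap.ker a.dualMap) := by
  have hk : LinearMap.ker a.dualMap = (LinearMap.range a).dualAnnihilator :=
    a.ker_dualMap_eq_dualAnnihilator_range
  have hr : LinearMap.range b.dualMap = (LinearMap.ker b).dualAnnihilator :=
    b.range_dualMap_eq_dualAnnihilator_ker
  have hii : LinearMap.range b.dualMap ⊓ LinearMap.ker a.dualMap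
      = (LinearMap.ker b ⊔ LinearMap.range a).dualAnnihilator := by
    rw [hk, hr, Submodule.dualAnnihilator_sup_eq]
  rw [hii, hk]
  have e1 := aux_ann_finrank F B (LinearMap.range a)
  have e2 := aux_ann_finrank F B (LinearMap.ker b ⊔ LinearMap.range a)
  have e3 := Submodule.finrank_sup_add_finrank_inf_eq (LinearMap.ker b) (LinearMap.range a)
  have e4 : LinearMap.range a ⊓ LinearMap.ker b = LinearMap.ker b ⊓ LinearMap.range a :=
    inf_comm _ _
  rw [e4]
  omega

/-- nondegenerate pairing gives an equiv onto the dual. -/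
noncomputable def pairEquiv (F A A' : Type*) [Field F]
    [AddCommGroup A] [Module F A] [FiniteDimensional F A]
    [AddCommGroup A'] [Module F A'] [FiniteDimensional F A']
    (p : A →ₗ[F] A' →ₗ[F] F)
    (nd1 : ∀ ξ : A, ξ ≠ 0 → ∃ η : A', p ξ η ≠ 0)
    (nd2 : ∀ η : A', η ≠ 0 → ∃ ξ : A, p ξ η ≠ 0) :
    A' ≃ₗ[F] Module.Dual F A := by
  have inj1 : Function.Injective p := by
    rw [← LinearMap.ker_eq_bot, LinearMap.ker_eq_bot']
    intro ξ hξ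
    by_contra hne
    obtain ⟨η, hη⟩ := nd1 ξ hne
    exact hη (by rw [hξ]; rfl)
  have inj2 : Function.Injective p.flip := by
    rw [← LinearMap.ker_eq_bot, LinearMap.ker_eq_bot']
    intro η hη
    by_contra hne
    obtain ⟨ξ, hξ⟩ := nd2 η hne
    exact hξ (by have := congrFun (congrArg DFunLike.coe hη) ξ; simpa using this)
  have d1 : finrank F A' ≤ finrank F A := by
    have := LinearMap.finrank_le_finrank_of_injective inj2
    rwa [Subspace.dual_finrank_eq] at this
  have d2 : finrank F A ≤ finrank F A' := by
    have := LinearMap.finrank_le_finrank_of_injective inj1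
    rwa [Subspace.dual_finrank_eq] at this
  exact p.flip.linearEquivOfInjective inj2 (by rw [Subspace.dual_finrank_eq]; omega)

theorem pairEquiv_apply (F A A' : Type*) [Field F]
    [AddCommGroup A] [Module F A] [FiniteDimensional F A]
    [AddCommGroup A'] [Module F A'] [FiniteDimensional F A']
    (p : A →ₗ[F] A' →ₗ[F] F) (nd1) (nd2) (η : A') (ξ : A) :
    pairEquiv F A A' p nd1 nd2 η ξ = p ξ η := rfl

theorem aux_main (F A B C A' B' C' : Type*) [Field F]
    [AddCommGroup A] [Module F A] [FiniteDimensional F A]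
    [AddCommGroup B] [Module F B] [FiniteDimensional F B]
    [AddCommGroup C] [Module F C] [FiniteDimensional F C]
    [AddCommGroup A'] [Module F A'] [FiniteDimensional F A']
    [AddCommGroup B'] [Module F B'] [FiniteDimensional F B']
    [AddCommGroup C'] [Module F C'] [FiniteDimensional F C']
    (a : A →ₗ[F] B) (b : B →ₗ[F] C) (h1 : B' →ₗ[F] A') (h2 : C' →ₗ[F] B')
    (pA : A →ₗ[F] A' →ₗ[F] F) (pB : B →ₗ[F] B' →ₗ[F] F) (pC : C →ₗ[F] C' →ₗ[F] F)
    (ndA1 : ∀ ξ : A, ξ ≠ 0 → ∃ η : A', pA ξ η ≠ 0)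
    (ndA2 : ∀ η : A', η ≠ 0 → ∃ ξ : A, pA ξ η ≠ 0)
    (ndB1 : ∀ ξ : B, ξ ≠ 0 → ∃ η : B', pB ξ η ≠ 0)
    (ndB2 : ∀ η : B', η ≠ 0 → ∃ ξ : B, pB ξ η ≠ 0)
    (ndC1 : ∀ ξ : C, ξ ≠ 0 → ∃ η : C', pC ξ η ≠ 0)
    (ndC2 : ∀ η : C', η ≠ 0 → ∃ ξ : C, pC ξ η ≠ 0)
    (compat1 : ∀ (ξ : A) (η : B'), pB (a ξ) η = pA ξ (h1 η))
    (compat2 : ∀ (ξ : B) (η : C'), pC (b ξ) η = pB ξ (h2 η)) :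
    finrank F ↥(LinearMap.ker b) - finrank F ↥(LinearMap.range a ⊓ LinearMap.ker b)
      = finrank F ↥(LinearMap.ker h1) - finrank F ↥(LinearMap.range h2 ⊓ LinearMap.ker h1) := by
  set φA := pairEquiv F A A' pA ndA1 ndA2 with hφA
  set φB := pairEquiv F B B' pB ndB1 ndB2 with hφB
  set φC := pairEquiv F C C' pC ndC1 ndC2 with hφC
  have hA : (φA : A' →ₗ[F] Module.Dual F A) ∘ₗ h1 = a.dualMap ∘ₗ (φB : B' →ₗ[F] Module.Dual F B) := by
    apply LinearMap.ext; intro η; apply LinearMap.ext; intro ξ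
    exact (compat1 ξ η).symm
  have hB : (φB : B' →ₗ[F] Module.Dual F B) ∘ₗ h2 = b.dualMap ∘ₗ (φC : C' →ₗ[F] Module.Dual F C) := by
    apply LinearMap.ext; intro η; apply LinearMap.ext; intro ξ
    exact (compat2 ξ η).symm
  have mker : Submodule.map (φB : B' →ₗ[F] Module.Dual F B) (LinearMap.ker h1)
      = LinearMap.ker a.dualMap := by
    have : LinearMap.ker h1
        = Submodule.comap (φB : B' →ₗ[F] Module.Dual F B) (LinearMap.ker a.dualMap) := by
      rw [← LinearMap.ker_comp, ← hA, LinearEquiv.ker_comp]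
    rw [this, Submodule.map_comap_eq_of_surjective (f := (φB : B' →ₗ[F] Module.Dual F B)) φB.surjective]
  have mrange : Submodule.map (φB : B' →ₗ[F] Module.Dual F B) (LinearMap.range h2)
      = LinearMap.range b.dualMap := by
    rw [← LinearMap.range_comp, hB, LinearEquiv.range_comp]
  have e1 : finrank F ↥(LinearMap.ker h1) = finrank F ↥(LinearMap.ker a.dualMap) := by
    rw [← mker, LinearEquiv.finrank_map_eq]
  have e2 : finrank F ↥(LinearMap.range h2 ⊓ LinearMap.ker h1)
      = finrank F ↥(LinearMap.range b.dualMap ⊓ LinearMap.ker a.dualMap) := by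
    rw [← mker, ← mrange, ← Submodule.map_inf (φB : B' →ₗ[F] Module.Dual F B) φB.injective, LinearEquiv.finrank_map_eq]
  rw [e1, e2]
  exact aux_dual_dims F A B C a b

/-- `dim (ker g_{j,k}) − dim (range g_{i,j} ∩ ker g_{j,k})
  = dim (ker h_{m-j,m-i}) − dim (range h_{m-k,m-j} ∩ ker h_{m-j,m-i})`. -/
theorem ker_minus_inf_dims_equal
    (F : Type*) [Field F] (m : ℕ)
    (X Y : ℕ → Type*)
    [∀ i, AddCommGroup (X i)] [∀ i, Module F (X i)] [∀ i, FiniteDimensional F (X i)]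
    [∀ i, AddCommGroup (Y i)] [∀ i, Module F (Y i)] [∀ i, FiniteDimensional F (Y i)]
    (g : ∀ i j : ℕ, i ≤ j → (X i →ₗ[F] X j))
    (h : ∀ i j : ℕ, i ≤ j → (Y i →ₗ[F] Y j))
    (gid : ∀ i, g i i le_rfl = LinearMap.id)
    (gcomp : ∀ i j k (hij : i ≤ j) (hjk : j ≤ k),
      (g j k hjk).comp (g i j hij) = g i k (hij.trans hjk))
    (hid : ∀ i, h i i le_rfl = LinearMap.id)
    (hcomp : ∀ i j k (hij : i ≤ j) (hjk : j ≤ k),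
      (h j k hjk).comp (h i j hij) = h i k (hij.trans hjk))
    (pair : ∀ j : ℕ, X j →ₗ[F] Y (m - j) →ₗ[F] F)
    (nondegX : ∀ j : ℕ, j ≤ m → ∀ ξ : X j, ξ ≠ 0 → ∃ η : Y (m - j), pair j ξ η ≠ 0)
    (nondegY : ∀ j : ℕ, j ≤ m → ∀ η : Y (m - j), η ≠ 0 → ∃ ξ : X j, pair j ξ η ≠ 0)
    (compat : ∀ (i j : ℕ) (hij : i ≤ j), j ≤ m → ∀ (ξ' : X i) (η : Y (m - j)),
      pair j (g i j hij ξ') η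
        = pair i ξ' (h (m - j) (m - i) (Nat.sub_le_sub_left hij m) η)) :
    ∀ (i j k : ℕ) (hij : i ≤ j) (hjk : j ≤ k), k ≤ m →
      finrank F ↥(LinearMap.ker (g j k hjk))
          - finrank F ↥(LinearMap.range (g i j hij) ⊓ LinearMap.ker (g j k hjk))
        = finrank F ↥(LinearMap.ker (h (m - j) (m - i) (Nat.sub_le_sub_left hij m)))
          - finrank F ↥(LinearMap.range (h (m - k) (m - j) (Nat.sub_le_sub_left hjk m)) ⊓
                        LinearMap.ker (h (m - j) (m - i) (Nat.sub_le_sub_left hij m))) := by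
  intro i j k hij hjk hkm
  have hjm : j ≤ m := hjk.trans hkm
  have him : i ≤ m := hij.trans hjm
  exact aux_main F (X i) (X j) (X k) (Y (m - i)) (Y (m - j)) (Y (m - k))
    (g i j hij) (g j k hjk)
    (h (m - j) (m - i) (Nat.sub_le_sub_left hij m))
    (h (m - k) (m - j) (Nat.sub_le_sub_left hjk m))
    (pair i) (pair j) (pair k)
    (nondegX i him) (nondegY i him) (nondegX j hjm) (nondegY j hjm)
    (nondegX k hkm) (nondegY k hkm)
    (compat i j hij hjm) (compat j k hjk hkm)
end
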